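/- Let n ≥ 3 be an integer, let ν ≥ (n−2)/2 be real, and let σ > n/2. Then there exists a constant C > 0 (depending only on n, ν, σ) such that for every 0 < λ ≤ 1, ∫₀^∞ ∫₀^∞ r s · J_ν(λr)² J_ν(λs)² (1+r)^{−2σ} (1+s)^{−2σ} dr ds ≤ C λ^{2(n−2)}. -/

import Mathlib

/-!
For `x > 0` we have `J_ν(x) = (x/2)^ν G((x/2)²)` with `G` an entire power series whose
coefficients are bounded by `1 / (Γ(ν+1) k!)`; this gives `J_ν(x)² ≲ x^{2ν}` for `x ≤ 1`.
For large `x` we use that `J_ν` solves Bessel's equation `x² f'' + x f' + (x² - ν²) f = 0`: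
along any solution the energy `(f² + f'²) exp(ν²/x)` is nonincreasing, so `J_ν` is bounded
on `[1, ∞)`. Since `n - 2 ≤ 2ν`, together `J_ν(x)² ≤ K x^{n-2}` for all `x > 0`. The double
integral is the square of `∫ r J_ν(λr)² (1+r)^{-2σ} dr ≤ K λ^{n-2} ∫ (1+r)^{n-1-2σ} dr`, and
the last integral is finite because `2σ > n`.
-/
open MeasureTheory Real Set

/-- The Bessel function of the first kind of order `ν`, defined by its power series
(with the convention `1/Γ = 0` at the poles of `Γ`). -/
noncomputable def besselJ (ν : ℝ) (x : ℝ) : ℝ :=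
  ∑' k : ℕ, ((-1 : ℝ) ^ k / ((k.factorial : ℝ) * Real.Gamma (ν + (k : ℝ) + 1))) *
    (x / 2) ^ (2 * (k : ℝ) + ν)

def FactorialBounded (a : ℕ → ℝ) (M : ℝ) : Prop := ∀ k : ℕ, |a k| ≤ M / k.factorial

noncomputable def powerSum (a : ℕ → ℝ) (t : ℝ) : ℝ := ∑' k : ℕ, a k * t ^ k

def derivCoeff (a : ℕ → ℝ) (k : ℕ) : ℝ := (k + 1) * a (k + 1)

theorem natCast_mul_abs_pow_pred_le {y R : ℝ} (hy : |y| ≤ R) (hR : 1 ≤ R) (k : ℕ) :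
    k * |y| ^ (k - 1) ≤ (2 * R) ^ k := by
  calc (k : ℝ) * |y| ^ (k - 1) ≤ 2 ^ k * R ^ k := by
        gcongr
        · exact_mod_cast (Nat.lt_two_pow_self).le
        · exact (pow_le_pow_left₀ (abs_nonneg y) hy _).trans (pow_le_pow_right₀ hR (k.sub_le 1))
    _ = (2 * R) ^ k := (mul_pow 2 R k).symm

namespace FactorialBounded

variable {a : ℕ → ℝ} {M : ℝ}

theorem nonneg (h : FactorialBounded a M) : 0 ≤ M := by
  simpa using (abs_nonneg _).trans (h 0)

theorem derivCoeff (h : FactorialBounded a M) : FactorialBounded (_root_.derivCoeff a) M := by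
  intro k
  have hk : (0 : ℝ) < k + 1 := by positivity
  calc |_root_.derivCoeff a k| = (k + 1) * |a (k + 1)| := by
        rw [_root_.derivCoeff, abs_mul, abs_of_pos hk]
    _ ≤ (k + 1) * (M / (k + 1).factorial) := mul_le_mul_of_nonneg_left (h (k + 1)) hk.le
    _ = M / k.factorial := by
        rw [Nat.factorial_succ]; push_cast; field_simp

theorem norm_term_le (h : FactorialBounded a M) (t : ℝ) (k : ℕ) :
    ‖a k * t ^ k‖ ≤ M * (|t| ^ k / k.factorial) := by
  rw [norm_mul, norm_pow, Real.norm_eq_abs, Real.norm_eq_abs]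
  exact (mul_le_mul_of_nonneg_right (h k) (by positivity)).trans_eq (by ring)

theorem summable (h : FactorialBounded a M) (t : ℝ) : Summable fun k => a k * t ^ k :=
  .of_norm_bounded ((Real.summable_pow_div_factorial |t|).mul_left M) (h.norm_term_le t)

theorem abs_powerSum_le (h : FactorialBounded a M) (t : ℝ) :
    |powerSum a t| ≤ M * exp |t| := by
  have hexp := (NormedSpace.expSeries_div_hasSum_exp |t|).mul_left M
  rw [← exp_eq_exp_ℝ] at hexp
  exact tsum_of_norm_bounded hexp (h.norm_term_le t)

theorem hasDerivAt_powerSum (h : FactorialBounded a M) (t : ℝ) :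
    HasDerivAt (powerSum a) (powerSum (_root_.derivCoeff a) t) t := by
  set R := |t| + 1
  have hR : 1 ≤ R := by simp [R]
  have hderiv : ∀ k y, y ∈ Metric.ball (0 : ℝ) R →
      HasDerivAt (fun z => a k * z ^ k) (a k * (k * y ^ (k - 1))) y :=
    fun k y _ => (hasDerivAt_pow k y).const_mul (a k)
  have hbound : ∀ k y, y ∈ Metric.ball (0 : ℝ) R →
      ‖a k * (k * y ^ (k - 1))‖ ≤ M * ((2 * R) ^ k / k.factorial) := by
    intro k y hy
    have hyR : |y| ≤ R := (mem_ball_zero_iff.mp hy).le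
    rw [norm_mul, norm_mul, Real.norm_eq_abs, Real.norm_eq_abs, norm_pow, Real.norm_eq_abs,
      Nat.abs_cast]
    exact (mul_le_mul (h k) (natCast_mul_abs_pow_pred_le hyR hR k) (by positivity)
      (div_nonneg h.nonneg (by positivity))).trans_eq (by ring)
  have hsum := hasDerivAt_tsum_of_isPreconnected
    ((Real.summable_pow_div_factorial (2 * R)).mul_left M) Metric.isOpen_ball
    (convex_ball (0 : ℝ) R).isPreconnected hderiv hbound (Metric.mem_ball_self (by positivity))
    (h.summable 0) (by simp [R] : t ∈ Metric.ball (0 : ℝ) R)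
  refine hsum.congr_deriv ?_
  rw [tsum_eq_zero_add' ?_]
  · simp [powerSum, _root_.derivCoeff, mul_comm, mul_left_comm]
  · refine (h.derivCoeff.summable t).congr fun k => ?_
    simp [_root_.derivCoeff]; ring

theorem hasSum_mul_powerSum_derivCoeff (h : FactorialBounded a M) (t : ℝ) :
    HasSum (fun k => k * a k * t ^ k) (t * powerSum (_root_.derivCoeff a) t) := by
  rw [← hasSum_nat_add_iff' 1]
  simp only [Finset.range_one, Finset.sum_singleton, CharP.cast_eq_zero, zero_mul, sub_zero,
    powerSum, ← tsum_mul_left]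
  refine ((h.derivCoeff.summable t).mul_left t).hasSum.congr_fun fun k => ?_
  simp only [_root_.derivCoeff]; push_cast; ring

end FactorialBounded

theorem antitoneOn_besselEnergy {ν : ℝ} {f f' f'' : ℝ → ℝ}
    (hf : ∀ x, 0 < x → HasDerivAt f (f' x) x) (hf' : ∀ x, 0 < x → HasDerivAt f' (f'' x) x)
    (hode : ∀ x, 0 < x → x ^ 2 * f'' x + x * f' x + (x ^ 2 - ν ^ 2) * f x = 0) :
    AntitoneOn (fun x => (f x ^ 2 + f' x ^ 2) * exp (ν ^ 2 / x)) (Ioi 0) := by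
  have hE : ∀ x, 0 < x → HasDerivAt (fun x => (f x ^ 2 + f' x ^ 2) * exp (ν ^ 2 / x))
      (-(exp (ν ^ 2 / x) / x ^ 2) * (2 * x * f' x ^ 2 + ν ^ 2 * (f x - f' x) ^ 2)) x := by
    intro x hx
    have hexp := ((hasDerivAt_inv hx.ne').const_mul (ν ^ 2)).exp
    simp only [← div_eq_mul_inv] at hexp
    refine ((((hf x hx).pow 2).add ((hf' x hx).pow 2)).mul hexp).congr_deriv ?_
    -- the ODE turns the derivative into minus a sum of squares
    simp only [Pi.add_apply, Pi.pow_apply]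
    field_simp
    linear_combination 2 * f' x * hode x hx
  refine antitoneOn_of_hasDerivWithinAt_nonpos (convex_Ioi 0)
    (f' := fun x => -(exp (ν ^ 2 / x) / x ^ 2) * (2 * x * f' x ^ 2 + ν ^ 2 * (f x - f' x) ^ 2))
    (fun x hx => (hE x hx).continuousAt.continuousWithinAt) (fun x hx => ?_) (fun x hx => ?_)
  · rw [interior_Ioi] at hx
    exact (hE x hx).hasDerivWithinAt
  · rw [interior_Ioi] at hx
    have hx : 0 < x := hx
    exact mul_nonpos_of_nonpos_of_nonneg (neg_nonpos.mpr (by positivity)) (by positivity)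

theorem sq_le_of_besselODE {ν : ℝ} {f f' f'' : ℝ → ℝ}
    (hf : ∀ x, 0 < x → HasDerivAt f (f' x) x) (hf' : ∀ x, 0 < x → HasDerivAt f' (f'' x) x)
    (hode : ∀ x, 0 < x → x ^ 2 * f'' x + x * f' x + (x ^ 2 - ν ^ 2) * f x = 0)
    {x : ℝ} (hx : 1 ≤ x) : f x ^ 2 ≤ (f 1 ^ 2 + f' 1 ^ 2) * exp (ν ^ 2) := by
  have hanti := antitoneOn_besselEnergy hf hf' hode (mem_Ioi.2 one_pos)
    (mem_Ioi.2 (one_pos.trans_le hx)) hx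
  simp only [div_one] at hanti
  calc f x ^ 2 ≤ (f x ^ 2 + f' x ^ 2) * 1 := by nlinarith [sq_nonneg (f' x)]
    _ ≤ (f x ^ 2 + f' x ^ 2) * exp (ν ^ 2 / x) := by
        gcongr; exact Real.one_le_exp (by positivity)
    _ ≤ _ := hanti

theorem hasDerivAt_half_rpow_mul_comp_sq {μ x : ℝ} {g g' : ℝ → ℝ} (hx : 0 < x)
    (hg : HasDerivAt g (g' ((x / 2) ^ 2)) ((x / 2) ^ 2)) :
    HasDerivAt (fun y => (y / 2) ^ μ * g ((y / 2) ^ 2))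
      (μ / 2 * (x / 2) ^ (μ - 1) * g ((x / 2) ^ 2) + (x / 2) ^ (μ + 1) * g' ((x / 2) ^ 2)) x := by
  have hu : 0 < x / 2 := by positivity
  have hhalf : HasDerivAt (fun y : ℝ => y / 2) (1 / 2) x := (hasDerivAt_id x).div_const 2
  have hpow := ((Real.hasDerivAt_rpow_const (p := μ) (Or.inl hu.ne')).comp x hhalf).mul
    (hg.comp x (hhalf.pow 2))
  refine hpow.congr_deriv ?_
  rw [Real.rpow_add_one hu.ne']
  simp only [Function.comp_apply, Pi.pow_apply]
  push_cast
  ring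

theorem exists_sq_half_rpow_mul_comp_sq_le {ν : ℝ} {g g' g'' : ℝ → ℝ}
    (hg : ∀ t, HasDerivAt g (g' t) t) (hg' : ∀ t, HasDerivAt g' (g'' t) t)
    (hode : ∀ t, t * g'' t + (ν + 1) * g' t + g t = 0) :
    ∃ B, ∀ x, 1 ≤ x → ((x / 2) ^ ν * g ((x / 2) ^ 2)) ^ 2 ≤ B := by
  set F : ℝ → ℝ := fun x => (x / 2) ^ ν * g ((x / 2) ^ 2)
  set F' : ℝ → ℝ := fun x =>
    ν / 2 * ((x / 2) ^ (ν - 1) * g ((x / 2) ^ 2)) + (x / 2) ^ (ν + 1) * g' ((x / 2) ^ 2)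
  -- `F''` is left in the shape produced by `hasDerivAt_half_rpow_mul_comp_sq`
  set F'' : ℝ → ℝ := fun x =>
    ν / 2 * ((ν - 1) / 2 * (x / 2) ^ (ν - 1 - 1) * g ((x / 2) ^ 2)
        + (x / 2) ^ (ν - 1 + 1) * g' ((x / 2) ^ 2))
      + ((ν + 1) / 2 * (x / 2) ^ (ν + 1 - 1) * g' ((x / 2) ^ 2)
        + (x / 2) ^ (ν + 1 + 1) * g'' ((x / 2) ^ 2))
  have hF : ∀ x, 0 < x → HasDerivAt F (F' x) x := fun x hx =>
    (hasDerivAt_half_rpow_mul_comp_sq hx (hg _)).congr_deriv (by simp only [F']; ring)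
  have hF' : ∀ x, 0 < x → HasDerivAt F' (F'' x) x := fun x hx =>
    ((hasDerivAt_half_rpow_mul_comp_sq hx (hg _)).const_mul (ν / 2)).add
      (hasDerivAt_half_rpow_mul_comp_sq hx (hg' _))
  have hodeF : ∀ x, 0 < x → x ^ 2 * F'' x + x * F' x + (x ^ 2 - ν ^ 2) * F x = 0 := by
    intro x hx
    obtain ⟨u, rfl⟩ : ∃ u, x = 2 * u := ⟨x / 2, by ring⟩
    have hu : u ≠ 0 := by rintro rfl; simp at hx
    simp only [F, F', F'', mul_div_cancel_left₀ u two_ne_zero, sub_add_cancel,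
      add_sub_cancel_right, Real.rpow_sub_one hu, Real.rpow_add_one hu]
    field_simp
    linear_combination (4 * u ^ 2 * u ^ ν) * hode (u ^ 2)
  exact ⟨_, fun x hx => sq_le_of_besselODE hF hF' hodeF hx⟩

noncomputable def besselCoeff (ν : ℝ) (k : ℕ) : ℝ :=
  (-1) ^ k / (k.factorial * Gamma (ν + k + 1))

theorem Real.Gamma_add_one_le_Gamma_add_natCast_add_one {ν : ℝ} (hν : 0 ≤ ν) (k : ℕ) :
    Gamma (ν + 1) ≤ Gamma (ν + k + 1) := by
  induction k with
  | zero => simp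
  | succ k ih =>
    have hpos : 0 < ν + k + 1 := by positivity
    rw [Nat.cast_succ, ← add_assoc, Gamma_add_one hpos.ne']
    nlinarith [Gamma_pos_of_pos hpos]

theorem factorialBounded_besselCoeff {ν : ℝ} (hν : 0 ≤ ν) :
    FactorialBounded (besselCoeff ν) (Gamma (ν + 1))⁻¹ := by
  intro k
  have hΓ : 0 < Gamma (ν + 1) := Gamma_pos_of_pos (by positivity)
  rw [besselCoeff, abs_div, abs_pow, abs_neg, abs_one, one_pow, abs_of_pos (by positivity),
    inv_div_left, ← one_div]
  exact one_div_le_one_div_of_le (by positivity)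
    (by gcongr; exact Real.Gamma_add_one_le_Gamma_add_natCast_add_one hν k)

theorem besselCoeff_recurrence {ν : ℝ} (hν : -1 < ν) (k : ℕ) :
    (k + ν + 1) * derivCoeff (besselCoeff ν) k + besselCoeff ν k = 0 := by
  have hpos : 0 < ν + k + 1 := by linarith [(k.cast_nonneg : (0 : ℝ) ≤ k)]
  have hΓ : 0 < Gamma (ν + k + 1) := Gamma_pos_of_pos hpos
  rw [derivCoeff, besselCoeff, besselCoeff, Nat.factorial_succ, Nat.cast_succ, ← add_assoc ν,
    Gamma_add_one hpos.ne']
  push_cast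
  field_simp
  ring

theorem powerSum_besselCoeff_ode {ν : ℝ} (hν : 0 ≤ ν) (t : ℝ) :
    t * powerSum (derivCoeff (derivCoeff (besselCoeff ν))) t
      + (ν + 1) * powerSum (derivCoeff (besselCoeff ν)) t + powerSum (besselCoeff ν) t = 0 := by
  have hb := factorialBounded_besselCoeff hν
  have hsum := ((hb.derivCoeff.hasSum_mul_powerSum_derivCoeff t).add
    ((hb.derivCoeff.summable t).hasSum.mul_left (ν + 1))).add (hb.summable t).hasSum
  refine hsum.unique (hasSum_zero.congr_fun fun k => ?_)
  linear_combination t ^ k * besselCoeff_recurrence (by linarith) k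

theorem besselJ_eq_half_rpow_mul_powerSum (ν : ℝ) {x : ℝ} (hx : 0 < x) :
    besselJ ν x = (x / 2) ^ ν * powerSum (besselCoeff ν) ((x / 2) ^ 2) := by
  rw [besselJ, powerSum, ← tsum_mul_left]
  refine tsum_congr fun k => ?_
  rw [Real.rpow_add (by positivity), show (2 * k : ℝ) = ((2 * k : ℕ) : ℝ) by push_cast; ring,
    Real.rpow_natCast, pow_mul, besselCoeff]
  ring

theorem abs_besselJ_le {ν : ℝ} (hν : 0 ≤ ν) {x : ℝ} (hx : 0 < x) :
    |besselJ ν x| ≤ (Gamma (ν + 1))⁻¹ * exp ((x / 2) ^ 2) * (x / 2) ^ ν := by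
  have hseries := (factorialBounded_besselCoeff hν).abs_powerSum_le ((x / 2) ^ 2)
  rw [abs_of_nonneg (by positivity : (0 : ℝ) ≤ (x / 2) ^ 2)] at hseries
  rw [besselJ_eq_half_rpow_mul_powerSum ν hx, abs_mul, abs_of_nonneg (by positivity), mul_comm]
  exact mul_le_mul_of_nonneg_right hseries (by positivity)

theorem exists_besselJ_sq_le {ν : ℝ} (hν : 0 ≤ ν) : ∃ B, ∀ x, 1 ≤ x → besselJ ν x ^ 2 ≤ B := by
  have hb := factorialBounded_besselCoeff hν
  obtain ⟨B, hB⟩ := exists_sq_half_rpow_mul_comp_sq_le hb.hasDerivAt_powerSum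
    hb.derivCoeff.hasDerivAt_powerSum (powerSum_besselCoeff_ode hν)
  exact ⟨B, fun x hx => besselJ_eq_half_rpow_mul_powerSum ν (one_pos.trans_le hx) ▸ hB x hx⟩

theorem exists_besselJ_sq_le_rpow {ν p : ℝ} (hν : 0 ≤ ν) (hp : 0 ≤ p) (hpν : p ≤ 2 * ν) :
    ∃ K ≥ 0, ∀ x, 0 < x → besselJ ν x ^ 2 ≤ K * x ^ p := by
  obtain ⟨B, hB⟩ := exists_besselJ_sq_le hν
  have hB0 : 0 ≤ B := (sq_nonneg _).trans (hB 1 le_rfl)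
  set S := ((Gamma (ν + 1))⁻¹ * exp 1) ^ 2
  refine ⟨S + B, by positivity, fun x hx => ?_⟩
  rcases le_total x 1 with hx1 | hx1
  · have hsmall : |besselJ ν x| ≤ (Gamma (ν + 1))⁻¹ * exp 1 * (x / 2) ^ ν :=
      (abs_besselJ_le hν hx).trans (by gcongr; nlinarith)
    have hpow : ((x / 2) ^ ν) ^ 2 ≤ x ^ p := by
      rw [← Real.rpow_mul_natCast (by positivity)]
      calc (x / 2) ^ (ν * (2 : ℕ)) ≤ (x / 2) ^ p :=
            Real.rpow_le_rpow_of_exponent_ge (by positivity) (by linarith) (by push_cast; linarith)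
        _ ≤ x ^ p := by gcongr; linarith
    calc besselJ ν x ^ 2 = |besselJ ν x| ^ 2 := (sq_abs _).symm
      _ ≤ ((Gamma (ν + 1))⁻¹ * exp 1 * (x / 2) ^ ν) ^ 2 := by gcongr
      _ = S * ((x / 2) ^ ν) ^ 2 := by ring
      _ ≤ (S + B) * x ^ p := by gcongr; linarith
  · calc besselJ ν x ^ 2 ≤ B := hB x hx1
      _ ≤ (S + B) * x ^ p := by
          nlinarith [Real.one_le_rpow hx1 hp, sq_nonneg ((Gamma (ν + 1))⁻¹ * exp 1)]

theorem integrableOn_Ioi_one_add_rpow {s : ℝ} (hs : s < -1) :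
    IntegrableOn (fun r : ℝ => (1 + r) ^ s) (Ioi 0) := by
  have h := integrable_one_add_norm (E := ℝ) (μ := volume) (r := -s) (by simp; linarith)
  refine (h.integrableOn (s := Ioi 0)).congr_fun (fun r (hr : 0 < r) => ?_) measurableSet_Ioi
  simp [abs_of_pos hr]

theorem integral_integral_mul {α β : Type*} [MeasurableSpace α] [MeasurableSpace β]
    (μ : Measure α) (ν : Measure β) (f : α → ℝ) (g : β → ℝ) :
    ∫ x, ∫ y, f x * g y ∂ν ∂μ = (∫ x, f x ∂μ) * ∫ y, g y ∂ν := by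
  simp_rw [integral_const_mul, integral_mul_const]

theorem setIntegral_mul_besselJ_sq_le {ν p σ K lam : ℝ} (hp : 0 ≤ p) (hσ : p + 2 < 2 * σ)
    (hK : 0 ≤ K) (hJ : ∀ x, 0 < x → besselJ ν x ^ 2 ≤ K * x ^ p) (hlam : 0 < lam) :
    ∫ r in Ioi 0, r * besselJ ν (lam * r) ^ 2 * (1 + r) ^ (-(2 * σ))
      ≤ K * lam ^ p * ∫ r in Ioi 0, (1 + r) ^ (p + 1 - 2 * σ) := by
  rw [← integral_const_mul]
  refine setIntegral_mono_of_nonneg (fun r (hr : 0 < r) => by positivity) (fun r (hr : 0 < r) => ?_)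
    ((integrableOn_Ioi_one_add_rpow (by linarith)).const_mul _)
  have h1r : 0 < 1 + r := by linarith
  have hJr : besselJ ν (lam * r) ^ 2 ≤ K * lam ^ p * (1 + r) ^ p :=
    calc besselJ ν (lam * r) ^ 2 ≤ K * (lam * r) ^ p := hJ _ (by positivity)
      _ ≤ K * lam ^ p * (1 + r) ^ p := by
          rw [Real.mul_rpow hlam.le hr.le, mul_assoc]; gcongr; linarith
  calc r * besselJ ν (lam * r) ^ 2 * (1 + r) ^ (-(2 * σ))
      ≤ (1 + r) * (K * lam ^ p * (1 + r) ^ p) * (1 + r) ^ (-(2 * σ)) := by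
        gcongr; linarith
    _ = K * lam ^ p * (1 + r) ^ (p + 1 - 2 * σ) := by
        rw [show p + 1 - 2 * σ = p + -(2 * σ) + 1 by ring, Real.rpow_add_one h1r.ne',
          Real.rpow_add h1r]
        ring

theorem bessel_double_integral_lowfreq
    (n : ℕ) (hn : 3 ≤ n) (ν : ℝ) (hν : ((n : ℝ) - 2) / 2 ≤ ν)
    (σ : ℝ) (hσ : (n : ℝ) / 2 < σ) :
    ∃ C > (0 : ℝ), ∀ lam : ℝ, 0 < lam → lam ≤ 1 →
      (∫ r in Ioi (0 : ℝ), ∫ s in Ioi (0 : ℝ),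
          r * s * besselJ ν (lam * r) ^ (2 : ℕ) * besselJ ν (lam * s) ^ (2 : ℕ) *
            (1 + r) ^ (-(2 * σ)) * (1 + s) ^ (-(2 * σ)))
        ≤ C * lam ^ (2 * ((n : ℝ) - 2)) := by
  have hn : (3 : ℝ) ≤ n := by exact_mod_cast hn
  obtain ⟨K, hK, hJ⟩ := exists_besselJ_sq_le_rpow (ν := ν) (p := n - 2) (by linarith) (by linarith)
    (by linarith)
  set A := ∫ r in Ioi (0 : ℝ), (1 + r) ^ ((n : ℝ) - 2 + 1 - 2 * σ)
  refine ⟨(K * A) ^ 2 + 1, by positivity, fun lam hlam _ => ?_⟩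
  set I := ∫ r in Ioi (0 : ℝ), r * besselJ ν (lam * r) ^ 2 * (1 + r) ^ (-(2 * σ))
  have hfactor : (∫ r in Ioi (0 : ℝ), ∫ s in Ioi (0 : ℝ),
      r * s * besselJ ν (lam * r) ^ 2 * besselJ ν (lam * s) ^ 2 *
        (1 + r) ^ (-(2 * σ)) * (1 + s) ^ (-(2 * σ))) = I ^ 2 := by
    rw [sq, ← integral_integral_mul]
    congr 1; ext r; congr 1; ext s; ring
  have hI0 : 0 ≤ I := setIntegral_nonneg measurableSet_Ioi fun r (hr : 0 < r) => by positivity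
  have hI := setIntegral_mul_besselJ_sq_le (σ := σ) (by linarith) (by linarith) hK hJ hlam
  rw [hfactor, show 2 * ((n : ℝ) - 2) = ((n : ℝ) - 2) * (2 : ℕ) by push_cast; ring,
    Real.rpow_mul_natCast hlam.le]
  calc I ^ 2 ≤ (K * lam ^ ((n : ℝ) - 2) * A) ^ 2 := pow_le_pow_left₀ hI0 hI 2
    _ ≤ ((K * A) ^ 2 + 1) * (lam ^ ((n : ℝ) - 2)) ^ 2 := by
        nlinarith [sq_nonneg (lam ^ ((n : ℝ) - 2))]
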